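/- arXiv:1607.02371 — 2 statements merged into one kernel-verified Lean document; each statement's English description precedes it below -/
import Mathlib

section
/- Let δ(W¹,W²) = ∑_{x,y} |W¹_{xy} − W²_{xy}| and call a pair of complete allocation states (W¹,W²) minimal if δ(W¹,W²) ≤ δ(W¹',W²') for all W¹' reachable from W¹ and W²' reachable from W² by sequences of single-atom distribution moves. If (W¹,W²) is minimal and y is a resource with W¹_y < β_y, then W¹_{xy} = W²_{xy} for all x ∈ X. -/
variable {X : Type*} [Fintype X]

/-- Complete allocation state. -/
def IsAllocState (E : X → X → Prop) (α β : X → ℕ) (W : X → X → ℕ) : Prop :=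
  (∀ x y, ¬ E x y → W x y = 0) ∧ (∀ x, ∑ y, W x y = α x) ∧ ∀ y, ∑ x, W x y ≤ β y

/-- Single-atom distribution move. -/
def DistMove [DecidableEq X] (E : X → X → Prop) (β : X → ℕ)
    (W W' : X → X → ℕ) : Prop :=
  ∃ x y y', 0 < W x y ∧ E x y' ∧ (∑ u, W u y') < β y' ∧
    ∀ u v, W' u v = W u v - (if u = x ∧ v = y then 1 else 0)
      + (if u = x ∧ v = y' then 1 else 0)

/-- `δ(W¹,W²) = ∑_{x,y} |W¹_{xy} − W²_{xy}|`. -/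
def delta (W₁ W₂ : X → X → ℕ) : ℕ := ∑ x, ∑ y, Nat.dist (W₁ x y) (W₂ x y)

lemma delta_comm (A B : X → X → ℕ) : delta A B = delta B A := by
  simp [delta, Nat.dist_comm]

/-- If `A x y < B x y` and column `y` has slack in `A`, then one distribution
move on `A` strictly decreases `delta`. -/
lemma step_lemma [DecidableEq X] (E : X → X → Prop) (β : X → ℕ)
    (A B : X → X → ℕ)
    (hzero : ∀ u v, B u v ≠ 0 → E u v)
    (hrow : ∀ u, ∑ v, A u v = ∑ v, B u v)
    (x y : X) (hlt : A x y < B x y) (hslack : ∑ u, A u y < β y) :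
    ∃ A', DistMove E β A A' ∧ delta A' B < delta A B := by
  have hy' : ∃ y', B x y' < A x y' := by
    by_contra h
    push_neg at h
    have hs : ∑ v, A x v < ∑ v, B x v :=
      Finset.sum_lt_sum (fun i _ => h i) ⟨y, Finset.mem_univ y, hlt⟩
    exact absurd (hrow x) (Nat.ne_of_lt hs)
  obtain ⟨y', hy'⟩ := hy'
  have hne : y ≠ y' := by
    intro h; rw [h] at hlt; omega
  refine ⟨fun u v => A u v - (if u = x ∧ v = y' then 1 else 0)
      + (if u = x ∧ v = y then 1 else 0), ⟨x, y', y, by omega,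
      hzero x y (by omega), hslack, fun u v => rfl⟩, ?_⟩
  unfold delta
  apply Finset.sum_lt_sum (s := Finset.univ)
  · intro u _
    apply Finset.sum_le_sum
    intro v _
    by_cases hu : u = x
    · subst hu
      by_cases hv : v = y
      · subst hv
        simp only [hne, and_true, and_false, if_true, if_false]
        simp [Nat.dist]
        omega
      · by_cases hv' : v = y'
        · subst hv'
          simp only [hv, and_false, and_true, if_true, if_false]
          simp [Nat.dist]
          omega
        · simp [hv, hv']
    · simp [hu]
  · refine ⟨x, Finset.mem_univ x, ?_⟩
    apply Finset.sum_lt_sum (s := Finset.univ)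
    · intro v _
      by_cases hv : v = y
      · subst hv
        simp only [hne, and_true, and_false, if_true, if_false, true_and]
        simp [Nat.dist]
        omega
      · by_cases hv' : v = y'
        · subst hv'
          simp only [hv, and_false, and_true, if_true, if_false, true_and]
          simp [Nat.dist]
          omega
        · simp [hv, hv']
    · refine ⟨y, Finset.mem_univ y, ?_⟩
      simp only [hne, and_true, and_false, if_true, if_false, true_and]
      simp [Nat.dist]
      omega

/-- minimal-pair lemma: if `(W¹,W²)` is a minimal pair of
complete allocation states and `W¹_y < β_y`, then `W¹_{xy} = W²_{xy}` for all
`x`. -/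
theorem minimal_pair_lemma [DecidableEq X]
    (E : X → X → Prop) (α β : X → ℕ) (W₁ W₂ : X → X → ℕ)
    (h₁ : IsAllocState E α β W₁) (h₂ : IsAllocState E α β W₂)
    (hmin : ∀ V₁ V₂ : X → X → ℕ,
      Relation.ReflTransGen (DistMove E β) W₁ V₁ →
      Relation.ReflTransGen (DistMove E β) W₂ V₂ →
      delta W₁ W₂ ≤ delta V₁ V₂)
    (y : X) (hy : ∑ x, W₁ x y < β y) :
    ∀ x, W₁ x y = W₂ x y := by
  have hz₁ : ∀ u v, W₁ u v ≠ 0 → E u v := fun u v h => by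
    by_contra hE; exact h (h₁.1 u v hE)
  have hz₂ : ∀ u v, W₂ u v ≠ 0 → E u v := fun u v h => by
    by_contra hE; exact h (h₂.1 u v hE)
  have hrow : ∀ u, ∑ v, W₁ u v = ∑ v, W₂ u v := fun u =>
    (h₁.2.1 u).trans (h₂.2.1 u).symm
  intro x
  by_contra hxy
  by_cases hex : ∃ u, W₁ u y < W₂ u y
  · obtain ⟨u, hu⟩ := hex
    obtain ⟨A', hmove, hδ⟩ := step_lemma E β W₁ W₂ hz₂ hrow u y hu hy
    have := hmin A' W₂ (Relation.ReflTransGen.single hmove) Relation.ReflTransGen.refl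
    omega
  · push_neg at hex
    have hx2 : W₂ x y < W₁ x y := by
      have := hex x; omega
    have hslack2 : ∑ u, W₂ u y < β y :=
      lt_of_le_of_lt (Finset.sum_le_sum fun u _ => hex u) hy
    obtain ⟨A', hmove, hδ⟩ := step_lemma E β W₂ W₁ hz₁
      (fun u => (hrow u).symm) x y hx2 hslack2
    have := hmin W₁ A' Relation.ReflTransGen.refl (Relation.ReflTransGen.single hmove)
    rw [delta_comm W₁ A', delta_comm W₁ W₂] at this
    omega
end

section
/- Under the strict Hall condition ∑_{x∈D} α_x < ∑_{y∈N(D)} β_y for all nonempty D ⊆ X, the graph L on complete allocation states (with edges given by single-atom distribution moves) is connected; equivalently, every minimal pair (W¹,W²) of complete allocation states satisfies W¹ = W². -/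
variable {X : Type*} [Fintype X]

/-!
Among the pairs of states reachable from `W₁` and `W₂`, take one, `(V₁, V₂)`, with least `δ`.
Within a row, moving an atom of `V₁` from an entry above that of `V₂` to an entry below it
lowers `δ`; hence a column with slack is the same in `V₁` and `V₂`, and no row where they differ is
adjacent to a column with slack. Follow alternating paths: from a row where the states differ to
an adjacent column, from a column to a row holding an atom of `V₁` there, and on to an adjacent
column. If a shortest such path ends in a column with slack, moving the last atom along it in
both states keeps `δ` and gives slack to a column that a shorter path reaches, so by induction on
the length, every column reached is full. If `V₁ ≠ V₂`, the differing rows together with the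
rows holding atoms in reached columns form a set `D` whose neighbourhood is full with the atoms of
`D` alone, against the strict Hall condition. So `V₁ = V₂`, and as moves can be undone, `W₁` and
`W₂` are connected.
-/

open Finset Relation

lemma exists_lt_of_sum_eq_of_lt {ι M : Type*} [AddCommMonoid M] [LinearOrder M]
    [IsOrderedCancelAddMonoid M] {f g : ι → M} {s : Finset ι}
    (hsum : ∑ i ∈ s, f i = ∑ i ∈ s, g i) {a : ι} (ha : a ∈ s) (hlt : f a < g a) :
    ∃ b ∈ s, g b < f b := by
  by_contra! h
  exact (sum_lt_sum h ⟨a, ha, hlt⟩).ne hsum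

lemma sum_sum_eq_sum_sum_of_support {ι κ M : Type*} [Fintype ι] [Fintype κ] [AddCommMonoid M]
    (f : ι → κ → M) {R : Finset ι} {C : Finset κ} (hR : ∀ u ∈ R, ∀ z, f u z ≠ 0 → z ∈ C)
    (hC : ∀ z ∈ C, ∀ u, f u z ≠ 0 → u ∈ R) :
    ∑ z ∈ C, ∑ u, f u z = ∑ u ∈ R, ∑ z, f u z :=
  calc ∑ z ∈ C, ∑ u, f u z = ∑ z ∈ C, ∑ u ∈ R, f u z :=
        sum_congr rfl fun z hz =>
          (sum_subset (subset_univ R) fun u _ hu => not_not.1 (mt (hC z hz u) hu)).symm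
    _ = ∑ u ∈ R, ∑ z ∈ C, f u z := sum_comm
    _ = ∑ u ∈ R, ∑ z, f u z :=
        sum_congr rfl fun u hu =>
          sum_subset (subset_univ C) fun z _ hz => not_not.1 (mt (hR u hu z) hz)

lemma delta_comm_s12 (V W : X → X → ℕ) : delta V W = delta W V := by
  simp only [delta, Nat.dist_comm]

section AllocStates

variable {E : X → X → Prop} {α β : X → ℕ}

lemma IsAllocState.adj_of_pos {V : X → X → ℕ} (hV : IsAllocState E α β V) {x y : X}
    (hpos : 0 < V x y) : E x y := by
  by_contra h
  exact hpos.ne' (hV.1 x y h)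

lemma IsAllocState.exists_lt_of_lt {V₁ V₂ : X → X → ℕ} (h₁ : IsAllocState E α β V₁)
    (h₂ : IsAllocState E α β V₂) {x a : X} (hlt : V₁ x a < V₂ x a) : ∃ b, V₂ x b < V₁ x b := by
  obtain ⟨b, -, hb⟩ :=
    exists_lt_of_sum_eq_of_lt ((h₁.2.1 x).trans (h₂.2.1 x).symm) (mem_univ a) hlt
  exact ⟨b, hb⟩

variable [DecidableEq X]

/-- `V − e_{xy} + e_{xy'}`. -/
def moveAtom (V : X → X → ℕ) (x y y' : X) : X → X → ℕ :=
  fun u v => V u v - (if u = x ∧ v = y then 1 else 0) + (if u = x ∧ v = y' then 1 else 0)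

section Cells

omit [Fintype X]

variable {V : X → X → ℕ} {x y : X}

lemma moveAtom_add_ite (hpos : 0 < V x y) (y' u v : X) :
    moveAtom V x y y' u v + (if u = x ∧ v = y then 1 else 0)
      = V u v + (if u = x ∧ v = y' then 1 else 0) := by
  unfold moveAtom
  split_ifs with h <;> first | omega | (obtain ⟨rfl, rfl⟩ := h; omega)

lemma le_moveAtom (hpos : 0 < V x y) (y' : X) {u v : X} (huv : ¬(u = x ∧ v = y)) :
    V u v ≤ moveAtom V x y y' u v := by
  have := moveAtom_add_ite hpos y' u v
  rw [if_neg huv] at this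
  omega

lemma moveAtom_apply_target_pos (V : X → X → ℕ) (x y y' : X) : 0 < moveAtom V x y y' x y' := by
  simp [moveAtom]

lemma moveAtom_moveAtom (hpos : 0 < V x y) (y' : X) : moveAtom (moveAtom V x y y') x y' y = V := by
  funext u v
  have h₁ := moveAtom_add_ite hpos y' u v
  have h₂ := moveAtom_add_ite (moveAtom_apply_target_pos V x y y') y u v
  omega

lemma dist_moveAtom_moveAtom {V₁ V₂ : X → X → ℕ} (h₁ : 0 < V₁ x y) (h₂ : 0 < V₂ x y)
    (y' u v : X) :
    Nat.dist (moveAtom V₁ x y y' u v) (moveAtom V₂ x y y' u v) = Nat.dist (V₁ u v) (V₂ u v) := by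
  have e₁ := moveAtom_add_ite h₁ y' u v
  have e₂ := moveAtom_add_ite h₂ y' u v
  unfold Nat.dist
  split_ifs at e₁ e₂ <;> omega

lemma moveAtom_eq_moveAtom_iff {V₁ V₂ : X → X → ℕ} (h₁ : 0 < V₁ x y) (h₂ : 0 < V₂ x y)
    (y' u v : X) : moveAtom V₁ x y y' u v = moveAtom V₂ x y y' u v ↔ V₁ u v = V₂ u v := by
  have := dist_moveAtom_moveAtom h₁ h₂ y' u v
  unfold Nat.dist at this
  omega

end Cells

variable {V : X → X → ℕ} {x y : X}

lemma sum_row_moveAtom (hpos : 0 < V x y) (y' u : X) :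
    ∑ v, moveAtom V x y y' u v = ∑ v, V u v := by
  have h := sum_congr rfl fun v (_ : v ∈ univ) => moveAtom_add_ite hpos y' u v
  simpa [sum_add_distrib, ite_and] using h

lemma sum_col_moveAtom (hpos : 0 < V x y) (y' v : X) :
    ∑ u, moveAtom V x y y' u v + (if v = y then 1 else 0)
      = ∑ u, V u v + (if v = y' then 1 else 0) := by
  have h := sum_congr rfl fun u (_ : u ∈ univ) => moveAtom_add_ite hpos y' u v
  simpa [sum_add_distrib, ite_and] using h

lemma sum_col_moveAtom_source (hpos : 0 < V x y) {y' : X} (hyy : y ≠ y') :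
    ∑ u, moveAtom V x y y' u y + 1 = ∑ u, V u y := by
  simpa [hyy] using sum_col_moveAtom hpos y' y

lemma sum_sum_add_ite (f : X → X → ℕ) (x y : X) :
    ∑ u, ∑ v, (f u v + if u = x ∧ v = y then 1 else 0) = ∑ u, ∑ v, f u v + 1 := by
  simp [sum_add_distrib, ite_and]

lemma delta_moveAtom_le {W : X → X → ℕ} (h : W x y < V x y) (y' : X) :
    delta (moveAtom V x y y') W ≤ delta V W := by
  have hcell : ∀ u v, Nat.dist (moveAtom V x y y' u v) (W u v) + (if u = x ∧ v = y then 1 else 0)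
      ≤ Nat.dist (V u v) (W u v) + (if u = x ∧ v = y' then 1 else 0) := by
    intro u v
    rcases eq_or_ne u x with rfl | hu
    · rcases eq_or_ne v y with rfl | hy <;> rcases eq_or_ne v y' with rfl | hy' <;>
        simp [moveAtom, Nat.dist, *] <;> omega
    · simp [moveAtom, hu]
  have := sum_le_sum fun u (_ : u ∈ univ) => sum_le_sum fun v (_ : v ∈ univ) => hcell u v
  rw [sum_sum_add_ite, sum_sum_add_ite] at this
  exact Nat.le_of_add_le_add_right this

lemma delta_moveAtom_lt {W : X → X → ℕ} {y' : X} (h : W x y < V x y) (h' : V x y' < W x y') :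
    delta (moveAtom V x y y') W < delta V W := by
  have hcell : ∀ u v, Nat.dist (moveAtom V x y y' u v) (W u v) + (if u = x ∧ v = y then 1 else 0)
      + (if u = x ∧ v = y' then 1 else 0) ≤ Nat.dist (V u v) (W u v) := by
    intro u v
    rcases eq_or_ne u x with rfl | hu
    · rcases eq_or_ne v y with rfl | hy <;> rcases eq_or_ne v y' with rfl | hy' <;>
        simp [moveAtom, Nat.dist, *] <;> omega
    · simp [moveAtom, hu]
  have := sum_le_sum fun u (_ : u ∈ univ) => sum_le_sum fun v (_ : v ∈ univ) => hcell u v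
  rw [sum_sum_add_ite, sum_sum_add_ite] at this
  unfold delta
  omega

lemma delta_moveAtom_moveAtom {V₁ V₂ : X → X → ℕ} (h₁ : 0 < V₁ x y) (h₂ : 0 < V₂ x y)
    (y' : X) : delta (moveAtom V₁ x y y') (moveAtom V₂ x y y') = delta V₁ V₂ :=
  sum_congr rfl fun u _ => sum_congr rfl fun v _ => dist_moveAtom_moveAtom h₁ h₂ y' u v

lemma distMove_iff {V' : X → X → ℕ} : DistMove E β V V' ↔
    ∃ x y y', 0 < V x y ∧ E x y' ∧ ∑ u, V u y' < β y' ∧ V' = moveAtom V x y y' := by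
  simp only [DistMove, funext_iff]
  rfl

lemma IsAllocState.moveAtom (hV : IsAllocState E α β V) {y' : X} (hpos : 0 < V x y)
    (hE : E x y') (hslack : ∑ u, V u y' < β y') : IsAllocState E α β (moveAtom V x y y') := by
  obtain ⟨hsupp, hrow, hcol⟩ := hV
  refine ⟨fun u v huv => ?_, fun u => (sum_row_moveAtom hpos y' u).trans (hrow u), fun v => ?_⟩
  · have h := moveAtom_add_ite hpos y' u v
    have : ¬(u = x ∧ v = y') := by rintro ⟨rfl, rfl⟩; exact huv hE
    simp only [hsupp u v huv, this, if_false] at h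
    omega
  · have h := sum_col_moveAtom hpos y' v
    have := hcol v
    split_ifs at h <;> subst_vars <;> omega

lemma IsAllocState.of_distMove {V' : X → X → ℕ} (hV : IsAllocState E α β V)
    (h : DistMove E β V V') : IsAllocState E α β V' := by
  obtain ⟨x, y, y', hpos, hE, hslack, rfl⟩ := distMove_iff.1 h
  exact hV.moveAtom hpos hE hslack

lemma IsAllocState.of_reflTransGen {V' : X → X → ℕ} (hV : IsAllocState E α β V)
    (h : ReflTransGen (DistMove E β) V V') : IsAllocState E α β V' := by
  induction h with
  | refl => exact hV
  | tail _ hmove ih => exact ih.of_distMove hmove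

lemma DistMove.symm {V' : X → X → ℕ} (hV : IsAllocState E α β V) (h : DistMove E β V V') :
    DistMove E β V' V := by
  obtain ⟨x, y, y', hpos, hE, hslack, rfl⟩ := distMove_iff.1 h
  refine distMove_iff.2 ⟨x, y', y, moveAtom_apply_target_pos V x y y', hV.adj_of_pos hpos, ?_,
    (moveAtom_moveAtom hpos y').symm⟩
  rcases eq_or_ne y y' with rfl | hyy
  · have := sum_col_moveAtom hpos y y
    simp only [if_true] at this
    omega
  · have := sum_col_moveAtom_source hpos hyy
    have := hV.2.2 y
    omega

lemma IsAllocState.reflTransGen_symm {V' : X → X → ℕ} (hV : IsAllocState E α β V)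
    (h : ReflTransGen (DistMove E β) V V') : ReflTransGen (DistMove E β) V' V := by
  induction h with
  | refl => exact .refl
  | tail hV' hmove ih => exact .head (hmove.symm (hV.of_reflTransGen hV')) ih

end AllocStates

section MinimalPairs

variable [DecidableEq X] {E : X → X → Prop} {α β : X → ℕ}

def IsMinimalPair (E : X → X → Prop) (β : X → ℕ) (V₁ V₂ : X → X → ℕ) : Prop :=
  ∀ U₁ U₂, ReflTransGen (DistMove E β) V₁ U₁ → ReflTransGen (DistMove E β) V₂ U₂ →
    delta V₁ V₂ ≤ delta U₁ U₂

lemma exists_isMinimalPair (W₁ W₂ : X → X → ℕ) : ∃ V₁ V₂, ReflTransGen (DistMove E β) W₁ V₁ ∧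
    ReflTransGen (DistMove E β) W₂ V₂ ∧ IsMinimalPair E β V₁ V₂ := by
  obtain ⟨⟨V₁, V₂⟩, ⟨h₁, h₂⟩, hmin⟩ :=
    (measure fun p : (X → X → ℕ) × (X → X → ℕ) => delta p.1 p.2).wf.has_min
      {p | ReflTransGen (DistMove E β) W₁ p.1 ∧ ReflTransGen (DistMove E β) W₂ p.2}
      ⟨(W₁, W₂), .refl, .refl⟩
  exact ⟨V₁, V₂, h₁, h₂, fun U₁ U₂ hU₁ hU₂ => not_lt.1 (hmin (U₁, U₂) ⟨h₁.trans hU₁, h₂.trans hU₂⟩)⟩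

namespace IsMinimalPair

variable {V₁ V₂ : X → X → ℕ}

lemma symm (h : IsMinimalPair E β V₁ V₂) : IsMinimalPair E β V₂ V₁ := fun U₁ U₂ h₁ h₂ => by
  simpa only [delta_comm_s12] using h U₂ U₁ h₂ h₁

lemma of_reflTransGen (h : IsMinimalPair E β V₁ V₂) {U₁ U₂ : X → X → ℕ}
    (h₁ : ReflTransGen (DistMove E β) V₁ U₁) (h₂ : ReflTransGen (DistMove E β) V₂ U₂)
    (hle : delta U₁ U₂ ≤ delta V₁ V₂) : IsMinimalPair E β U₁ U₂ :=
  fun W₁ W₂ hW₁ hW₂ => hle.trans (h W₁ W₂ (h₁.trans hW₁) (h₂.trans hW₂))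

variable (h : IsMinimalPair E β V₁ V₂) (h₁ : IsAllocState E α β V₁) (h₂ : IsAllocState E α β V₂)
include h h₁ h₂

lemma le_of_slack {y : X} (hslack : ∑ u, V₁ u y < β y) (x : X) : V₂ x y ≤ V₁ x y := by
  by_contra! hlt
  obtain ⟨s, hs⟩ := h₁.exists_lt_of_lt h₂ hlt
  have hmove := distMove_iff.2
    ⟨x, s, y, Nat.zero_lt_of_lt hs, h₂.adj_of_pos (Nat.zero_lt_of_lt hlt), hslack, rfl⟩
  exact (delta_moveAtom_lt hs hlt).not_ge (h _ _ (.single hmove) .refl)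

lemma col_eq_of_slack {y : X} (hslack : ∑ u, V₁ u y < β y) (x : X) : V₁ x y = V₂ x y := by
  have hle := h.le_of_slack h₁ h₂ hslack
  have hslack₂ : ∑ u, V₂ u y < β y := (sum_le_sum fun u _ => hle u).trans_lt hslack
  exact le_antisymm (h.symm.le_of_slack h₂ h₁ hslack₂ x) (hle x)

/-- Shifting an excess atom of `V₁` into the slack column `z` keeps the pair minimal, but the
column then differs in the two states while `V₂` still has slack there. -/
lemma row_eq_of_adj_slack {x z : X} (hE : E x z) (hslack : ∑ u, V₁ u z < β z) (s : X) :
    V₁ x s = V₂ x s := by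
  have hcol := h.col_eq_of_slack h₁ h₂ hslack
  by_contra hne
  obtain ⟨s, hs⟩ : ∃ s, V₂ x s < V₁ x s := by
    rcases lt_or_gt_of_ne hne with hlt | hlt
    · exact h₁.exists_lt_of_lt h₂ hlt
    · exact ⟨s, hlt⟩
  have hmove := distMove_iff.2 ⟨x, s, z, Nat.zero_lt_of_lt hs, hE, hslack, rfl⟩
  have h' := h.of_reflTransGen (.single hmove) .refl (delta_moveAtom_le hs z)
  have hslack₂ : ∑ u, V₂ u z < β z := by simpa only [hcol] using hslack
  have hsz : s ≠ z := by rintro rfl; exact hs.ne' (hcol x)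
  have hcol' := h'.symm.col_eq_of_slack h₂ (h₁.of_distMove hmove) hslack₂ x
  have hz := moveAtom_add_ite (Nat.zero_lt_of_lt hs) z x z
  simp only [true_and, hsz.symm, if_false, if_true, add_zero] at hz
  have := hcol x
  omega

end IsMinimalPair

/-- `AltReach E V₁ V₂ t y`: column `y` is the end of an alternating path with `t` inner columns,
which starts at a row where `V₁` and `V₂` differ and leaves each inner column through a row
holding an atom of `V₁` there. -/
inductive AltReach (E : X → X → Prop) (V₁ V₂ : X → X → ℕ) : ℕ → X → Prop
  | base {x y : X} (s : X) : V₁ x s ≠ V₂ x s → E x y → AltReach E V₁ V₂ 0 y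
  | step {t : ℕ} {x y y' : X} : AltReach E V₁ V₂ t y → 0 < V₁ x y → E x y' →
      AltReach E V₁ V₂ (t + 1) y'

omit [Fintype X] [DecidableEq X] in
lemma AltReach.of_le_off_cell {V₁ V₂ V₁' V₂' : X → X → ℕ} {x y : X}
    (hdiff : ∀ u v, V₁' u v = V₂' u v ↔ V₁ u v = V₂ u v)
    (hle : ∀ u v, ¬(u = x ∧ v = y) → V₁ u v ≤ V₁' u v) {t : ℕ} {z : X}
    (h : AltReach E V₁ V₂ t z) : AltReach E V₁' V₂' t z ∨ ∃ j < t, AltReach E V₁ V₂ j y := by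
  induction h with
  | base s hs hE => exact .inl (.base s (mt (hdiff _ s).1 hs) hE)
  | @step t x₁ y₁ _ hpath hpos hE ih =>
    rcases ih with ih | ⟨j, hj, hpath'⟩
    · by_cases hcell : x₁ = x ∧ y₁ = y
      · exact .inr ⟨t, t.lt_succ_self, hcell.2 ▸ hpath⟩
      · exact .inl (.step ih (hpos.trans_le (hle _ _ hcell)) hE)
    · exact .inr ⟨j, hj.trans t.lt_succ_self, hpath'⟩

lemma IsMinimalPair.full_of_altReach {t : ℕ} :
    ∀ {V₁ V₂ : X → X → ℕ} {y : X}, IsMinimalPair E β V₁ V₂ → IsAllocState E α β V₁ →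
      IsAllocState E α β V₂ → AltReach E V₁ V₂ t y → β y ≤ ∑ u, V₁ u y := by
  induction t using Nat.strong_induction_on with
  | _ t ih =>
  intro V₁ V₂ y h h₁ h₂ hreach
  by_contra! hslack
  cases hreach with
  | base s hs hE => exact hs (h.row_eq_of_adj_slack h₁ h₂ hE hslack s)
  | @step t x y₀ _ hpath hpos hE =>
    have hfull := ih t t.lt_succ_self h h₁ h₂ hpath
    have hyy : y₀ ≠ y := by rintro rfl; omega
    have hpos₂ : 0 < V₂ x y₀ := h.row_eq_of_adj_slack h₁ h₂ hE hslack y₀ ▸ hpos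
    have hslack₂ : ∑ u, V₂ u y < β y := by
      simpa only [h.col_eq_of_slack h₁ h₂ hslack] using hslack
    -- Moving the atom `(x, y₀)` to `y` in both states keeps `δ` and frees room in column `y₀`.
    have hmove₁ := distMove_iff.2 ⟨x, y₀, y, hpos, hE, hslack, rfl⟩
    have hmove₂ := distMove_iff.2 ⟨x, y₀, y, hpos₂, hE, hslack₂, rfl⟩
    have h' := h.of_reflTransGen (.single hmove₁) (.single hmove₂)
      (delta_moveAtom_moveAtom hpos hpos₂ y).le
    have hslack₀ : ∑ u, moveAtom V₁ x y₀ y u y₀ < β y₀ := by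
      have := sum_col_moveAtom_source hpos hyy
      have := h₁.2.2 y₀
      omega
    rcases hpath.of_le_off_cell (moveAtom_eq_moveAtom_iff hpos hpos₂ y)
      (fun u v => le_moveAtom hpos y) with hpath' | ⟨j, hj, hpath'⟩
    · exact (ih t t.lt_succ_self h' (h₁.of_distMove hmove₁) (h₂.of_distMove hmove₂)
        hpath').not_gt hslack₀
    · exact (ih (j + 1) (by omega) h h₁ h₂ (hpath'.step hpos hE)).not_gt hslack

def StrictHall (E : X → X → Prop) [DecidableRel E] (α β : X → ℕ) : Prop :=
  ∀ D : Finset X, D.Nonempty →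
    ∑ x ∈ D, α x < ∑ y ∈ D.biUnion (fun x => univ.filter fun y => E x y), β y

lemma exists_altReach_slack [DecidableRel E] (hall : StrictHall E α β) {V₁ V₂ : X → X → ℕ}
    (h₁ : IsAllocState E α β V₁) (hne : V₁ ≠ V₂) :
    ∃ t y, AltReach E V₁ V₂ t y ∧ ∑ u, V₁ u y < β y := by
  classical
  by_contra! hfull
  set C := univ.filter fun z => ∃ t, AltReach E V₁ V₂ t z
  set R := univ.filter fun u => (∃ s, V₁ u s ≠ V₂ u s) ∨ ∃ z ∈ C, 0 < V₁ u z
  have hRC : ∀ u ∈ R, ∀ z, E u z → z ∈ C := by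
    intro u hu z hE
    refine mem_filter.2 ⟨mem_univ z, ?_⟩
    rcases (mem_filter.1 hu).2 with ⟨s, hs⟩ | ⟨z', hz', hpos⟩
    · exact ⟨0, .base s hs hE⟩
    · obtain ⟨t, hreach⟩ := (mem_filter.1 hz').2
      exact ⟨t + 1, hreach.step hpos hE⟩
  have hR : R.Nonempty := by
    obtain ⟨u, s, hs⟩ : ∃ u s, V₁ u s ≠ V₂ u s := by
      by_contra! h
      exact hne (funext fun u => funext (h u))
    exact ⟨u, mem_filter.2 ⟨mem_univ u, .inl ⟨s, hs⟩⟩⟩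
  have hcount := sum_sum_eq_sum_sum_of_support V₁
    (fun u hu z hz => hRC u hu z (h₁.adj_of_pos (Nat.pos_of_ne_zero hz)))
    (fun z hz u hu => mem_filter.2 ⟨mem_univ u, .inr ⟨z, hz, Nat.pos_of_ne_zero hu⟩⟩)
  have hsub : R.biUnion (fun x => univ.filter fun y => E x y) ⊆ C := fun z hz => by
    obtain ⟨u, hu, hz⟩ := mem_biUnion.1 hz
    exact hRC u hu z (mem_filter.1 hz).2
  refine (hall R hR).not_ge ?_
  calc ∑ y ∈ R.biUnion (fun x => univ.filter fun y => E x y), β y ≤ ∑ z ∈ C, β z :=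
        sum_le_sum_of_subset hsub
    _ = ∑ z ∈ C, ∑ u, V₁ u z := sum_congr rfl fun z hz => by
        obtain ⟨t, hreach⟩ := (mem_filter.1 hz).2
        exact le_antisymm (hfull t z hreach) (h₁.2.2 z)
    _ = ∑ u ∈ R, α u := hcount.trans (sum_congr rfl fun u _ => h₁.2.1 u)

lemma IsMinimalPair.eq [DecidableRel E] (hall : StrictHall E α β) {V₁ V₂ : X → X → ℕ}
    (h : IsMinimalPair E β V₁ V₂) (h₁ : IsAllocState E α β V₁) (h₂ : IsAllocState E α β V₂) :
    V₁ = V₂ := by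
  by_contra hne
  obtain ⟨t, y, hreach, hslack⟩ := exists_altReach_slack hall h₁ hne
  exact (h.full_of_altReach h₁ h₂ hreach).not_gt hslack

end MinimalPairs

/-- under the strict Hall condition, the graph `L` on complete
allocation states (edges = single-atom distribution moves) is connected;
equivalently, every minimal pair of complete allocation states is a pair of
equal states. -/
theorem distribution_graph_connected [DecidableEq X]
    (E : X → X → Prop) [DecidableRel E] (α β : X → ℕ)
    (hall : ∀ D : Finset X, D.Nonempty → ∑ x ∈ D, α x <
      ∑ y ∈ D.biUnion (fun x => Finset.univ.filter fun y => E x y), β y) :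
    (∀ W₁ W₂ : X → X → ℕ, IsAllocState E α β W₁ → IsAllocState E α β W₂ →
      Relation.ReflTransGen (DistMove E β) W₁ W₂) ∧
    (∀ W₁ W₂ : X → X → ℕ, IsAllocState E α β W₁ → IsAllocState E α β W₂ →
      (∀ V₁ V₂ : X → X → ℕ,
        Relation.ReflTransGen (DistMove E β) W₁ V₁ →
        Relation.ReflTransGen (DistMove E β) W₂ V₂ →
        delta W₁ W₂ ≤ delta V₁ V₂) →
      W₁ = W₂) := by
  refine ⟨fun W₁ W₂ h₁ h₂ => ?_, fun W₁ W₂ h₁ h₂ hmin => IsMinimalPair.eq hall hmin h₁ h₂⟩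
  obtain ⟨V₁, V₂, hV₁, hV₂, hmin⟩ := exists_isMinimalPair (E := E) (β := β) W₁ W₂
  have heq : V₁ = V₂ := hmin.eq hall (h₁.of_reflTransGen hV₁) (h₂.of_reflTransGen hV₂)
  exact hV₁.trans (heq ▸ h₂.reflTransGen_symm hV₂)
end
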